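/- Let q, k ∈ ℝ^{2n}, m ∈ ℝ, and let an event interval have center c ∈ ℝ and radius r > 0. Let 0 ≤ δ < r and let ε_s, ε_e ∈ ℝ satisfy |ε_s| ≤ δ and |ε_e| ≤ δ. Set Δc := (ε_s + ε_e)/2 and Δr := (ε_e − ε_s)/2, and suppose C_min := inf_{ρ ∈ [r−δ, r+δ]} |C_ρ| > 0. Define the interval-attention score s(c', r') := ⟨R_m q, (1/C_{r'}) R_{c',r'} k⟩. Then |s(c + Δc, r + Δr) − s(c, r)| ≤ (‖q‖ · ‖k‖ · δ / (r − δ)) · (3/C_min + 2/C_min²). -/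

import Mathlib

noncomputable section

open MeasureTheory
open scoped RealInnerProductSpace

/-- `sinc x = sin x / x` for `x ≠ 0`, and `sinc 0 = 1`. -/
def sinc (x : ℝ) : ℝ := if x = 0 then 1 else Real.sin x / x

/-- The 2×2 rotation matrix. -/
def Rot (x : ℝ) : Matrix (Fin 2) (Fin 2) ℝ :=
  !![Real.cos x, -Real.sin x; Real.sin x, Real.cos x]

/-- The RoPE matrix `R_t`: block diagonal with ℓ-th block `Rot (θ ℓ * t)`. -/
def RoPE {n : ℕ} (θ : Fin n → ℝ) (t : ℝ) :
    Matrix (Fin 2 × Fin n) (Fin 2 × Fin n) ℝ :=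
  Matrix.blockDiagonal fun ℓ => Rot (θ ℓ * t)

/-- The interval (RoTE) matrix `R_{c,r}`: block diagonal with ℓ-th block
`sinc (θ ℓ * r) • Rot (θ ℓ * c)`. -/
def RoTE {n : ℕ} (θ : Fin n → ℝ) (c r : ℝ) :
    Matrix (Fin 2 × Fin n) (Fin 2 × Fin n) ℝ :=
  Matrix.blockDiagonal fun ℓ => sinc (θ ℓ * r) • Rot (θ ℓ * c)

/-- The normalization constant `C_r = (1/n) ∑ ℓ, sinc (θ ℓ * r)`. -/
def Cnorm {n : ℕ} (θ : Fin n → ℝ) (r : ℝ) : ℝ :=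
  (1 / (n : ℝ)) * ∑ ℓ : Fin n, sinc (θ ℓ * r)

/-- Action of a `2n × 2n` matrix on Euclidean space `ℝ^{2n}`. -/
def mApply {n : ℕ} (M : Matrix (Fin 2 × Fin n) (Fin 2 × Fin n) ℝ)
    (v : EuclideanSpace ℝ (Fin 2 × Fin n)) : EuclideanSpace ℝ (Fin 2 × Fin n) :=
  Matrix.toEuclideanLin M v

/-- Operator norm on `ℝ^{2n×2n}` induced by the Euclidean norm on `ℝ^{2n}`. -/
def opNorm {n : ℕ} (M : Matrix (Fin 2 × Fin n) (Fin 2 × Fin n) ℝ) : ℝ :=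
  ‖Matrix.toEuclideanCLM (𝕜 := ℝ) M‖

/-! ### Auxiliary lemmas -/

lemma mApply_apply' {n : ℕ} (M : Matrix (Fin 2 × Fin n) (Fin 2 × Fin n) ℝ)
    (v : EuclideanSpace ℝ (Fin 2 × Fin n)) (p : Fin 2 × Fin n) :
    mApply M v p = ∑ p', M p p' * v p' := by
  simp [mApply, Matrix.toEuclideanLin_apply, Matrix.mulVec, dotProduct]

lemma inner_blockDiag' {n : ℕ} (d e : Fin n → Matrix (Fin 2) (Fin 2) ℝ)
    (q k : EuclideanSpace ℝ (Fin 2 × Fin n)) :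
    ⟪mApply (Matrix.blockDiagonal d) q, mApply (Matrix.blockDiagonal e) k⟫ =
      ∑ ℓ : Fin n, ∑ i : Fin 2,
        (∑ j : Fin 2, d ℓ i j * q (j, ℓ)) * (∑ j : Fin 2, e ℓ i j * k (j, ℓ)) := by
  rw [PiLp.inner_apply]
  rw [Fintype.sum_prod_type, Finset.sum_comm]
  refine Finset.sum_congr rfl fun ℓ _ => Finset.sum_congr rfl fun i _ => ?_
  simp [mApply_apply', Fintype.sum_prod_type, Matrix.blockDiagonal_apply,
    Finset.mul_sum, mul_ite, ite_mul, Finset.sum_comm (γ := Fin n)]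
  ring

lemma block_comp' (s α β : ℝ) (u v : Fin 2 → ℝ) :
    ∑ i : Fin 2, (∑ j : Fin 2, Rot α i j * u j) *
      (∑ j : Fin 2, (s • Rot β) i j * v j) =
    s * (Real.cos (α - β) * (u 0 * v 0 + u 1 * v 1) +
         Real.sin (α - β) * (u 0 * v 1 - u 1 * v 0)) := by
  simp [Fin.sum_univ_two, Rot, Real.cos_sub, Real.sin_sub]
  ring

lemma score_eq' {n : ℕ} (θ : Fin n → ℝ) (q k : EuclideanSpace ℝ (Fin 2 × Fin n))
    (m c r : ℝ) :
    ⟪mApply (RoPE θ m) q, mApply (RoTE θ c r) k⟫ =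
      ∑ ℓ : Fin n, sinc (θ ℓ * r) *
        (Real.cos (θ ℓ * m - θ ℓ * c) * (q (0, ℓ) * k (0, ℓ) + q (1, ℓ) * k (1, ℓ)) +
         Real.sin (θ ℓ * m - θ ℓ * c) * (q (0, ℓ) * k (1, ℓ) - q (1, ℓ) * k (0, ℓ))) := by
  rw [RoPE, RoTE, inner_blockDiag']
  refine Finset.sum_congr rfl fun ℓ _ => ?_
  exact block_comp' (sinc (θ ℓ * r)) (θ ℓ * m) (θ ℓ * c)
    (fun j => q (j, ℓ)) (fun j => k (j, ℓ))

lemma abs_sinc_le_one' (x : ℝ) : |sinc x| ≤ 1 := by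
  unfold sinc
  split_ifs with h
  · simp
  · rw [abs_div]
    exact div_le_one_of_le₀ (Real.abs_sin_le_abs) (abs_nonneg _)

lemma abs_sinc_le_inv' {x : ℝ} (h : x ≠ 0) : |sinc x| ≤ 1 / |x| := by
  unfold sinc
  rw [if_neg h, abs_div]
  exact div_le_div_of_nonneg_right (Real.abs_sin_le_one x) (abs_pos.2 h).le

lemma abs_sin_sub_sin' (a b : ℝ) : |Real.sin a - Real.sin b| ≤ |a - b| := by
  rw [Real.sin_sub_sin, abs_mul, abs_mul]
  have h1 : |Real.sin ((a - b) / 2)| ≤ |a - b| / 2 := by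
    simpa [abs_div] using Real.abs_sin_le_abs (x := (a - b) / 2)
  have h2 : |Real.cos ((a + b) / 2)| ≤ 1 := Real.abs_cos_le_one _
  have h4 : (0 : ℝ) ≤ |Real.cos ((a + b) / 2)| := abs_nonneg _
  rw [abs_two]
  have := mul_le_mul h1 h2 h4 (by positivity : (0:ℝ) ≤ |a - b| / 2)
  linarith

lemma cos_sin_sub_sq' (a b : ℝ) :
    (Real.cos a - Real.cos b) ^ 2 + (Real.sin a - Real.sin b) ^ 2 ≤ (a - b) ^ 2 := by
  have h1 : (Real.cos a - Real.cos b) ^ 2 + (Real.sin a - Real.sin b) ^ 2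
      = 2 - 2 * Real.cos (a - b) := by
    have := Real.cos_sub a b
    nlinarith [Real.sin_sq_add_cos_sq a, Real.sin_sq_add_cos_sq b]
  have h2 : Real.sin ((a - b) / 2) ^ 2 = 1 / 2 - Real.cos (a - b) / 2 := by
    have := Real.sin_sq_eq_half_sub ((a - b) / 2)
    rwa [mul_div_cancel₀ (a - b) two_ne_zero] at this
  have h3 : Real.sin ((a - b) / 2) ^ 2 ≤ ((a - b) / 2) ^ 2 := Real.sin_sq_le_sq
  nlinarith

lemma cauchy2' (x y P Q : ℝ) :
    |x * P + y * Q| ≤ Real.sqrt (x ^ 2 + y ^ 2) * Real.sqrt (P ^ 2 + Q ^ 2) := by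
  rw [← Real.sqrt_mul (by positivity), ← Real.sqrt_sq_eq_abs]
  apply Real.sqrt_le_sqrt
  nlinarith [sq_nonneg (x * Q - y * P)]

lemma gbound' (x P Q : ℝ) :
    |Real.cos x * P + Real.sin x * Q| ≤ Real.sqrt (P ^ 2 + Q ^ 2) := by
  have h := cauchy2' (Real.cos x) (Real.sin x) P Q
  rwa [show Real.cos x ^ 2 + Real.sin x ^ 2 = 1 from by
      rw [add_comm]; exact Real.sin_sq_add_cos_sq x,
    Real.sqrt_one, one_mul] at h

lemma gdiff' (x y P Q : ℝ) :
    |(Real.cos x - Real.cos y) * P + (Real.sin x - Real.sin y) * Q|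
      ≤ |x - y| * Real.sqrt (P ^ 2 + Q ^ 2) := by
  calc |(Real.cos x - Real.cos y) * P + (Real.sin x - Real.sin y) * Q|
      ≤ Real.sqrt ((Real.cos x - Real.cos y) ^ 2 + (Real.sin x - Real.sin y) ^ 2) *
          Real.sqrt (P ^ 2 + Q ^ 2) := cauchy2' _ _ _ _
    _ ≤ Real.sqrt ((x - y) ^ 2) * Real.sqrt (P ^ 2 + Q ^ 2) := by
        gcongr
        exact cos_sin_sub_sq' x y
    _ = |x - y| * Real.sqrt (P ^ 2 + Q ^ 2) := by rw [Real.sqrt_sq_eq_abs]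

lemma sinc_diff' {θ r r' δ : ℝ} (hr : 0 < r) (hr' : 0 < r') (hd : |r' - r| ≤ δ) :
    |sinc (θ * r') - sinc (θ * r)| ≤ 2 * δ / r := by
  have hδ : 0 ≤ δ := le_trans (abs_nonneg _) hd
  rcases eq_or_ne θ 0 with h0 | h0
  · simp [h0]; positivity
  have ha : θ * r ≠ 0 := mul_ne_zero h0 hr.ne'
  have hb : θ * r' ≠ 0 := mul_ne_zero h0 hr'.ne'
  have hθ : (0 : ℝ) < |θ| := abs_pos.2 h0
  set a := θ * r with hadef
  set b := θ * r' with hbdef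
  have hra : |a| = |θ| * r := by rw [hadef, abs_mul, abs_of_pos hr]
  have key : sinc b - sinc a
      = (Real.sin b - Real.sin a) / a + (Real.sin b / b) * ((a - b) / a) := by
    unfold sinc
    rw [if_neg hb, if_neg ha]
    field_simp
    ring
  have hab : |b - a| ≤ |θ| * δ := by
    rw [hadef, hbdef, ← mul_sub, abs_mul]
    gcongr
  have hstep : ∀ z : ℝ, |z| ≤ |θ| * δ → |z| / |a| ≤ δ / r := by
    intro z hz
    rw [hra]
    calc |z| / (|θ| * r) ≤ (|θ| * δ) / (|θ| * r) := by gcongr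
      _ = δ / r := mul_div_mul_left _ _ hθ.ne'
  have h1 : |(Real.sin b - Real.sin a) / a| ≤ δ / r := by
    rw [abs_div]
    exact hstep _ ((abs_sin_sub_sin' b a).trans hab)
  have h2 : |(Real.sin b / b) * ((a - b) / a)| ≤ δ / r := by
    rw [abs_mul]
    have hs : |Real.sin b / b| ≤ 1 := by
      have := abs_sinc_le_one' b
      unfold sinc at this
      rwa [if_neg hb] at this
    have h2' : |(a - b) / a| ≤ δ / r := by
      rw [abs_div]
      exact hstep _ (by rwa [abs_sub_comm])
    calc |Real.sin b / b| * |(a - b) / a| ≤ 1 * (δ / r) :=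
          mul_le_mul hs h2' (abs_nonneg _) one_pos.le
      _ = δ / r := one_mul _
  calc |sinc b - sinc a|
      = |(Real.sin b - Real.sin a) / a + (Real.sin b / b) * ((a - b) / a)| := by rw [key]
    _ ≤ |(Real.sin b - Real.sin a) / a| + |(Real.sin b / b) * ((a - b) / a)| := abs_add_le _ _
    _ ≤ δ / r + δ / r := add_le_add h1 h2
    _ = 2 * δ / r := by ring

lemma sinc_mul_abs' {θ r dc δ : ℝ} (hr : 0 < r) (hδ : 0 ≤ δ) (hdc : |dc| ≤ δ) :
    |sinc (θ * r)| * |θ * dc| ≤ δ / r := by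
  rcases eq_or_ne θ 0 with h0 | h0
  · simp [h0]; positivity
  · have ha : θ * r ≠ 0 := mul_ne_zero h0 hr.ne'
    have hθ : (0 : ℝ) < |θ| := abs_pos.2 h0
    calc |sinc (θ * r)| * |θ * dc| ≤ (1 / |θ * r|) * (|θ| * δ) := by
          apply mul_le_mul (abs_sinc_le_inv' ha) ?_ (abs_nonneg _) (by positivity)
          rw [abs_mul]; gcongr
      _ = δ / r := by rw [abs_mul, abs_of_pos hr]; field_simp

lemma euclidean_norm_eq' {n : ℕ} (q : EuclideanSpace ℝ (Fin 2 × Fin n)) :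
    ‖q‖ = Real.sqrt (∑ ℓ : Fin n, (q (0, ℓ) ^ 2 + q (1, ℓ) ^ 2)) := by
  rw [EuclideanSpace.norm_eq]
  congr 1
  rw [Fintype.sum_prod_type, Fin.sum_univ_two, ← Finset.sum_add_distrib]
  simp [Real.norm_eq_abs, sq_abs]

set_option maxHeartbeats 1000000 in
/-- expected robustness of the normalized interval-attention score
`s(c', r') = ⟨R_m q, (1/C_{r'}) R_{c',r'} k⟩` to timestamp noise. -/
theorem rote_score_noise_robustness (n : ℕ) (hn : 1 ≤ n) (θ : Fin n → ℝ)
    (q k : EuclideanSpace ℝ (Fin 2 × Fin n)) (m : ℝ)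
    (c r δ : ℝ) (hr : 0 < r) (hδ0 : 0 ≤ δ) (hδr : δ < r)
    (εs εe : ℝ) (hεs : |εs| ≤ δ) (hεe : |εe| ≤ δ)
    (Cmin : ℝ)
    (hCmin : Cmin = sInf ((fun ρ => |Cnorm θ ρ|) '' Set.Icc (r - δ) (r + δ)))
    (hCpos : 0 < Cmin) :
    |⟪mApply (RoPE θ m) q,
        (1 / Cnorm θ (r + (εe - εs) / 2)) •
          mApply (RoTE θ (c + (εs + εe) / 2) (r + (εe - εs) / 2)) k⟫ -
      ⟪mApply (RoPE θ m) q, (1 / Cnorm θ r) • mApply (RoTE θ c r) k⟫| ≤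
      (‖q‖ * ‖k‖ * δ / (r - δ)) * (3 / Cmin + 2 / Cmin ^ 2) := by
  -- abbreviations
  set c' : ℝ := c + (εs + εe) / 2 with hc'
  set r' : ℝ := r + (εe - εs) / 2 with hr'
  have hrδ : 0 < r - δ := by linarith
  have hr'r : |r' - r| ≤ δ := by
    rw [hr']
    have : |(εe - εs) / 2| ≤ δ := by
      rw [abs_div, abs_two]
      calc |εe - εs| / 2 ≤ (|εe| + |εs|) / 2 := by
            have := abs_sub εe εs
            linarith
        _ ≤ δ := by linarith
    simpa using this
  have hr'pos : 0 < r' := by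
    have := abs_le.1 hr'r
    linarith [this.1]
  have hcc' : |c - c'| ≤ δ := by
    rw [hc']
    have : |(εs + εe) / 2| ≤ δ := by
      rw [abs_div, abs_two]
      calc |εs + εe| / 2 ≤ (|εs| + |εe|) / 2 := by
            have := abs_add_le εs εe
            linarith
        _ ≤ δ := by linarith
    simpa [abs_sub_comm] using this
  -- per-block data
  set P : Fin n → ℝ := fun ℓ => q (0, ℓ) * k (0, ℓ) + q (1, ℓ) * k (1, ℓ) with hP
  set Q : Fin n → ℝ := fun ℓ => q (0, ℓ) * k (1, ℓ) - q (1, ℓ) * k (0, ℓ) with hQ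
  set w : Fin n → ℝ := fun ℓ => Real.sqrt (P ℓ ^ 2 + Q ℓ ^ 2) with hw
  set W : ℝ := ∑ ℓ : Fin n, w ℓ with hW
  have hw0 : ∀ ℓ, 0 ≤ w ℓ := fun ℓ => Real.sqrt_nonneg _
  have hW0 : 0 ≤ W := Finset.sum_nonneg fun ℓ _ => hw0 ℓ
  -- W ≤ ‖q‖ * ‖k‖
  have hWN : W ≤ ‖q‖ * ‖k‖ := by
    rw [euclidean_norm_eq' q, euclidean_norm_eq' k, hW]
    have hterm : ∀ ℓ : Fin n, w ℓ =
        Real.sqrt (q (0, ℓ) ^ 2 + q (1, ℓ) ^ 2) * Real.sqrt (k (0, ℓ) ^ 2 + k (1, ℓ) ^ 2) := by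
      intro ℓ
      rw [hw, ← Real.sqrt_mul (by positivity)]
      congr 1
      rw [hP, hQ]
      ring
    rw [Finset.sum_congr rfl fun ℓ _ => hterm ℓ]
    exact Real.sum_sqrt_mul_sqrt_le _ (fun ℓ => by positivity) (fun ℓ => by positivity)
  -- scores as sums
  set T : ℝ := ∑ ℓ : Fin n, sinc (θ ℓ * r) *
      (Real.cos (θ ℓ * m - θ ℓ * c) * P ℓ + Real.sin (θ ℓ * m - θ ℓ * c) * Q ℓ) with hT
  set T' : ℝ := ∑ ℓ : Fin n, sinc (θ ℓ * r') *
      (Real.cos (θ ℓ * m - θ ℓ * c') * P ℓ + Real.sin (θ ℓ * m - θ ℓ * c') * Q ℓ) with hT'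
  have hip : ⟪mApply (RoPE θ m) q, mApply (RoTE θ c r) k⟫ = T := by
    rw [score_eq', hT]
  have hip' : ⟪mApply (RoPE θ m) q, mApply (RoTE θ c' r') k⟫ = T' := by
    rw [score_eq', hT']
  -- Cnorm facts
  set C : ℝ := Cnorm θ r with hC
  set C' : ℝ := Cnorm θ r' with hC'
  have hbdd : BddBelow ((fun ρ => |Cnorm θ ρ|) '' Set.Icc (r - δ) (r + δ)) := by
    refine ⟨0, fun y hy => ?_⟩
    obtain ⟨x, _, rfl⟩ := hy
    exact abs_nonneg _
  have hCminC : Cmin ≤ |C| := by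
    rw [hCmin]
    exact csInf_le hbdd ⟨r, ⟨by linarith, by linarith⟩, rfl⟩
  have hCminC' : Cmin ≤ |C'| := by
    rw [hCmin]
    refine csInf_le hbdd ⟨r', ⟨?_, ?_⟩, rfl⟩
    · have := (abs_le.1 hr'r).1; linarith
    · have := (abs_le.1 hr'r).2; linarith
  have hCne : C ≠ 0 := by
    intro h; rw [h, abs_zero] at hCminC; linarith
  have hC'ne : C' ≠ 0 := by
    intro h; rw [h, abs_zero] at hCminC'; linarith
  -- |C' - C| ≤ 2δ/r
  have hCC' : |C' - C| ≤ 2 * δ / r := by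
    rw [hC, hC', Cnorm, Cnorm, ← mul_sub, ← Finset.sum_sub_distrib, abs_mul]
    have hn0 : (0 : ℝ) < (n : ℝ) := by exact_mod_cast hn
    have h1 : |(1 : ℝ) / (n : ℝ)| = 1 / (n : ℝ) := abs_of_pos (by positivity)
    rw [h1]
    calc (1 / (n : ℝ)) * |∑ ℓ : Fin n, (sinc (θ ℓ * r') - sinc (θ ℓ * r))|
        ≤ (1 / (n : ℝ)) * ∑ ℓ : Fin n, |sinc (θ ℓ * r') - sinc (θ ℓ * r)| := by
          gcongr
          exact Finset.abs_sum_le_sum_abs _ _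
      _ ≤ (1 / (n : ℝ)) * ∑ _ℓ : Fin n, (2 * δ / r) := by
          gcongr with ℓ _
          exact sinc_diff' hr hr'pos hr'r
      _ = 2 * δ / r := by
          rw [Finset.sum_const, Finset.card_univ, Fintype.card_fin, nsmul_eq_mul]
          field_simp
  -- |T| ≤ W
  have hTW : |T| ≤ W := by
    rw [hT, hW]
    calc |∑ ℓ : Fin n, sinc (θ ℓ * r) *
          (Real.cos (θ ℓ * m - θ ℓ * c) * P ℓ + Real.sin (θ ℓ * m - θ ℓ * c) * Q ℓ)|
        ≤ ∑ ℓ : Fin n, |sinc (θ ℓ * r) *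
          (Real.cos (θ ℓ * m - θ ℓ * c) * P ℓ + Real.sin (θ ℓ * m - θ ℓ * c) * Q ℓ)| :=
          Finset.abs_sum_le_sum_abs _ _
      _ ≤ ∑ ℓ : Fin n, w ℓ := by
          refine Finset.sum_le_sum fun ℓ _ => ?_
          rw [abs_mul]
          calc |sinc (θ ℓ * r)| * |Real.cos (θ ℓ * m - θ ℓ * c) * P ℓ +
                Real.sin (θ ℓ * m - θ ℓ * c) * Q ℓ|
              ≤ 1 * w ℓ := by
                apply mul_le_mul (abs_sinc_le_one' _) (gbound' _ _ _) (abs_nonneg _) one_pos.le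
            _ = w ℓ := one_mul _
  -- |T' - T| ≤ 3δ/r * W
  have hTT' : |T' - T| ≤ 3 * δ / r * W := by
    rw [hT, hT', ← Finset.sum_sub_distrib, hW, Finset.mul_sum]
    refine (Finset.abs_sum_le_sum_abs _ _).trans (Finset.sum_le_sum fun ℓ _ => ?_)
    set φ : ℝ := θ ℓ * m - θ ℓ * c with hφ
    set φ' : ℝ := θ ℓ * m - θ ℓ * c' with hφ'
    have hsplit : sinc (θ ℓ * r') * (Real.cos φ' * P ℓ + Real.sin φ' * Q ℓ) -
        sinc (θ ℓ * r) * (Real.cos φ * P ℓ + Real.sin φ * Q ℓ)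
        = (sinc (θ ℓ * r') - sinc (θ ℓ * r)) * (Real.cos φ' * P ℓ + Real.sin φ' * Q ℓ) +
          sinc (θ ℓ * r) *
            ((Real.cos φ' - Real.cos φ) * P ℓ + (Real.sin φ' - Real.sin φ) * Q ℓ) := by
      ring
    rw [hsplit]
    have hb1 : |(sinc (θ ℓ * r') - sinc (θ ℓ * r)) *
        (Real.cos φ' * P ℓ + Real.sin φ' * Q ℓ)| ≤ (2 * δ / r) * w ℓ := by
      rw [abs_mul]
      exact mul_le_mul (sinc_diff' hr hr'pos hr'r) (gbound' _ _ _) (abs_nonneg _)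
        (by positivity)
    have hb2 : |sinc (θ ℓ * r) *
        ((Real.cos φ' - Real.cos φ) * P ℓ + (Real.sin φ' - Real.sin φ) * Q ℓ)|
        ≤ (δ / r) * w ℓ := by
      rw [abs_mul]
      have hg : |(Real.cos φ' - Real.cos φ) * P ℓ + (Real.sin φ' - Real.sin φ) * Q ℓ|
          ≤ |φ' - φ| * w ℓ := gdiff' φ' φ (P ℓ) (Q ℓ)
      have hφφ : φ' - φ = θ ℓ * (c - c') := by rw [hφ, hφ']; ring
      calc |sinc (θ ℓ * r)| *
            |(Real.cos φ' - Real.cos φ) * P ℓ + (Real.sin φ' - Real.sin φ) * Q ℓ|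
          ≤ |sinc (θ ℓ * r)| * (|φ' - φ| * w ℓ) := by
            gcongr
          _ = (|sinc (θ ℓ * r)| * |θ ℓ * (c - c')|) * w ℓ := by rw [hφφ]; ring
          _ ≤ (δ / r) * w ℓ := by
            gcongr
            exact sinc_mul_abs' hr hδ0 hcc'
    calc |(sinc (θ ℓ * r') - sinc (θ ℓ * r)) * (Real.cos φ' * P ℓ + Real.sin φ' * Q ℓ) +
          sinc (θ ℓ * r) *
            ((Real.cos φ' - Real.cos φ) * P ℓ + (Real.sin φ' - Real.sin φ) * Q ℓ)|
        ≤ (2 * δ / r) * w ℓ + (δ / r) * w ℓ := (abs_add_le _ _).trans (add_le_add hb1 hb2)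
      _ = 3 * δ / r * w ℓ := by ring
  -- put it together
  rw [real_inner_smul_right, real_inner_smul_right, hip, hip']
  have key : (1 / C') * T' - (1 / C) * T
      = (T' - T) / C' + T * (C - C') / (C * C') := by
    field_simp
    ring
  rw [key]
  have habs : |(T' - T) / C' + T * (C - C') / (C * C')|
      ≤ |T' - T| / |C'| + |T| * |C - C'| / (|C| * |C'|) := by
    refine (abs_add_le _ _).trans ?_
    rw [abs_div, abs_div, abs_mul, abs_mul]
  refine habs.trans ?_
  have hCpos' : (0:ℝ) < |C| := lt_of_lt_of_le hCpos hCminC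
  have hC'pos' : (0:ℝ) < |C'| := lt_of_lt_of_le hCpos hCminC'
  have hfin1 : |T' - T| / |C'| ≤ (3 * δ / r * W) / Cmin := by
    exact div_le_div₀ (by positivity) hTT' hCpos hCminC'
  have hfin2 : |T| * |C - C'| / (|C| * |C'|) ≤ (W * (2 * δ / r)) / (Cmin * Cmin) := by
    apply div_le_div₀ (by positivity)
    · exact mul_le_mul hTW (by rwa [abs_sub_comm]) (abs_nonneg _) hW0
    · positivity
    · exact mul_le_mul hCminC hCminC' hCpos.le (abs_nonneg _)
  refine (add_le_add hfin1 hfin2).trans ?_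
  set N : ℝ := ‖q‖ * ‖k‖ with hN
  have hN0 : 0 ≤ N := by positivity
  calc (3 * δ / r * W) / Cmin + (W * (2 * δ / r)) / (Cmin * Cmin)
      ≤ (3 * δ / (r - δ) * N) / Cmin + (N * (2 * δ / (r - δ))) / (Cmin * Cmin) := by
        gcongr <;> linarith
    _ = (N * δ / (r - δ)) * (3 / Cmin + 2 / Cmin ^ 2) := by
        field_simp
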